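/- Classification of minimal strong extensions: let B ⊆ A be finite-dimensional subspaces of V such that A is a minimal strong extension of B. Then δ(A/B) ∈ {0, 1}, and if dim(A/B) ≥ 2 then δ(A/B) = 0. -/

import Mathlib

/-!
Common notions: for a subspace `A` of an ambient `K`-vector space `M`, `wedge2 K A` is the
image of the exterior square `⋀² A` inside the exterior algebra of `M` (the span of the
products `a ∧ b` for `a, b ∈ A`).  For subspaces `C`, `B`, `fdim K C B` (resp. `cdim K C B`)
is the dimension of `B` over `C`, i.e. of the quotient `B / (C ∩ B)`, as a natural number
(resp. as a cardinal), and `FinOver K C B` says that `B` is finite-dimensional over `C`.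
Relative to a fixed subspace `N` of `⋀² M`, writing `N(X) := N ⊓ wedge2 K X`,
`pdim K N C B` is the relative predimension `δ(B/C) = dim(B/C) - dim(N(B)/N(C))` and
`pdim0 K N A = δ(A) = dim A - dim N(A)`.  `Strong K N B A` says that `B` is strong
(self-sufficient) in `A`:  `δ(C/B) ≥ 0` (stated in the equivalent subtraction-free form
`dim(N(C)/N(B)) ≤ dim(C/B)`) for every intermediate subspace `C` finite-dimensional over
`B`; `MinStrong K N B A` says that `A` is a minimal strong extension of `B`.
-/

noncomputable section

universe u v

variable (K : Type u) [Field K] {M : Type v} [AddCommGroup M] [Module K M]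

/-- The image of the exterior square `⋀² A` of a subspace `A` inside the exterior algebra
of the ambient space. -/
def wedge2 (A : Submodule K M) : Submodule K (ExteriorAlgebra K M) :=
  Submodule.span K
    {z | ∃ a ∈ A, ∃ b ∈ A, z = ExteriorAlgebra.ι K a * ExteriorAlgebra.ι K b}

/-- The relative dimension `dim (B / C)`, as a natural number. -/
def fdim (C B : Submodule K M) : ℕ :=
  Module.finrank K (↥B ⧸ Submodule.comap B.subtype C)

/-- The relative dimension `dim (B / C)`, as a cardinal. -/
def cdim (C B : Submodule K M) : Cardinal :=
  Module.rank K (↥B ⧸ Submodule.comap B.subtype C)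

/-- `B` is finite-dimensional over `C`. -/
def FinOver (C B : Submodule K M) : Prop :=
  Module.Finite K (↥B ⧸ Submodule.comap B.subtype C)

/-- The relative predimension `δ(B/C) = dim(B/C) - dim(N(B)/N(C))` with respect to `N`. -/
def pdim (N : Submodule K (ExteriorAlgebra K M)) (C B : Submodule K M) : ℤ :=
  (fdim K C B : ℤ) - (fdim K (N ⊓ wedge2 K C) (N ⊓ wedge2 K B) : ℤ)

/-- The predimension `δ(A) = dim A - dim N(A)` with respect to `N`. -/
def pdim0 (N : Submodule K (ExteriorAlgebra K M)) (A : Submodule K M) : ℤ :=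
  (Module.finrank K ↥A : ℤ) - (Module.finrank K ↥(N ⊓ wedge2 K A) : ℤ)

/-- `B` is strong (self-sufficient) in `A` with respect to `N`. -/
def Strong (N : Submodule K (ExteriorAlgebra K M)) (B A : Submodule K M) : Prop :=
  B ≤ A ∧ ∀ C : Submodule K M, B ≤ C → C ≤ A → FinOver K B C →
    cdim K (N ⊓ wedge2 K B) (N ⊓ wedge2 K C) ≤ Cardinal.lift.{u} (cdim K B C)

/-- `A` is a minimal strong extension of `B` with respect to `N`. -/
def MinStrong (N : Submodule K (ExteriorAlgebra K M)) (B A : Submodule K M) : Prop :=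
  Strong K N B A ∧ B < A ∧ ∀ C : Submodule K M, B < C → C < A → ¬ Strong K N C A


/-! If `δ(A/B) ≥ 1` for a minimal strong extension `A` of `B`, then `δ(D/B) ≥ 1` for every
`B < D ≤ A`: otherwise additivity `δ(E/B) = δ(D/B) + δ(E/D)` would make `D` strong in `A`.
Adjoining one vector of `A` to `B` gives `C` with `δ(C/B) ≤ dim(C/B) = 1 ≤ δ(E/B)` for all
`C ≤ E ≤ A`, so `C` is strong in `A`; when `dim(A/B) ≥ 2` this contradicts minimality. -/

open Module

variable {K} {N : Submodule K (ExteriorAlgebra K M)}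

lemma wedge2_mono {A B : Submodule K M} (h : A ≤ B) : wedge2 K A ≤ wedge2 K B :=
  Submodule.span_mono fun _ ⟨a, ha, b, hb, hz⟩ => ⟨a, h ha, b, h hb, hz⟩

lemma wedge2_le_map_mul_map (A : Submodule K M) :
    wedge2 K A ≤ A.map (ExteriorAlgebra.ι K) * A.map (ExteriorAlgebra.ι K) := by
  rw [wedge2, Submodule.span_le]
  rintro _ ⟨a, ha, b, hb, rfl⟩
  exact Submodule.mul_mem_mul (Submodule.mem_map_of_mem ha) (Submodule.mem_map_of_mem hb)

instance wedge2.finiteDimensional (A : Submodule K M) [FiniteDimensional K A] :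
    FiniteDimensional K (wedge2 K A) := by
  have hA : (A.map (ExteriorAlgebra.ι K)).FG := (Module.Finite.iff_fg.mp ‹_›).map _
  have := Module.Finite.iff_fg.mpr (hA.mul hA)
  exact Submodule.finiteDimensional_of_le (wedge2_le_map_mul_map A)

lemma fdim_add_finrank {C B : Submodule K M} (h : C ≤ B) [FiniteDimensional K B] :
    fdim K C B + finrank K C = finrank K B := by
  have h1 := Submodule.finrank_quotient_add_finrank (Submodule.comap B.subtype C)
  rwa [LinearEquiv.finrank_eq (Submodule.comapSubtypeEquivOfLe h)] at h1

lemma fdim_add_fdim {B C D : Submodule K M} (hBC : B ≤ C) (hCD : C ≤ D)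
    [FiniteDimensional K D] : fdim K B C + fdim K C D = fdim K B D := by
  have : FiniteDimensional K C := Submodule.finiteDimensional_of_le hCD
  have := fdim_add_finrank hBC
  have := fdim_add_finrank hCD
  have := fdim_add_finrank (hBC.trans hCD)
  omega

lemma pdim_add_pdim {B C D : Submodule K M} (hBC : B ≤ C) (hCD : C ≤ D)
    [FiniteDimensional K D] : pdim K N B C + pdim K N C D = pdim K N B D := by
  have : FiniteDimensional K ↥(N ⊓ wedge2 K D) := Submodule.finiteDimensional_inf_right ..
  have := fdim_add_fdim hBC hCD
  have := fdim_add_fdim (inf_le_inf_left N (wedge2_mono hBC)) (inf_le_inf_left N (wedge2_mono hCD))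
  unfold pdim
  omega

lemma fdim_pos_of_lt {B A : Submodule K M} [FiniteDimensional K A] (h : B < A) :
    0 < fdim K B A := by
  have := fdim_add_finrank h.le
  have := Submodule.finrank_lt_finrank_of_lt h
  omega

lemma pdim_le_fdim (C B : Submodule K M) : pdim K N C B ≤ fdim K C B :=
  sub_le_self _ (Int.natCast_nonneg _)

lemma cdim_le_lift_cdim_iff_pdim_nonneg {B C : Submodule K M} [FiniteDimensional K C] :
    cdim K (N ⊓ wedge2 K B) (N ⊓ wedge2 K C) ≤ Cardinal.lift.{u} (cdim K B C) ↔
      0 ≤ pdim K N B C := by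
  have : FiniteDimensional K ↥(N ⊓ wedge2 K C) := Submodule.finiteDimensional_inf_right ..
  simp only [cdim, fdim, pdim, ← Module.finrank_eq_rank, Cardinal.lift_natCast, Nat.cast_le]
  omega

lemma strong_iff_pdim_nonneg {B A : Submodule K M} [FiniteDimensional K A] :
    Strong K N B A ↔ B ≤ A ∧ ∀ C, B ≤ C → C ≤ A → 0 ≤ pdim K N B C := by
  refine and_congr_right fun _ => forall_congr' fun C => imp_congr_right fun _ => ?_
  refine ⟨fun h hCA => ?_, fun h hCA _ => ?_⟩
  all_goals have : FiniteDimensional K C := Submodule.finiteDimensional_of_le hCA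
  · exact cdim_le_lift_cdim_iff_pdim_nonneg.mp (h hCA (Module.Finite.quotient K _))
  · exact cdim_le_lift_cdim_iff_pdim_nonneg.mpr (h hCA)

lemma fdim_sup_span_singleton_le_one (B : Submodule K M) [FiniteDimensional K B] (a : M) :
    fdim K B (B ⊔ K ∙ a) ≤ 1 := by
  have := fdim_add_finrank (le_sup_left : B ≤ B ⊔ K ∙ a)
  have := Submodule.finrank_add_le_finrank_add_finrank B (K ∙ a)
  have : finrank K (K ∙ a) ≤ 1 := by simpa using finrank_span_le_card ({a} : Set M)
  omega

lemma Strong.pdim_nonneg {B C A : Submodule K M} [FiniteDimensional K A] (hs : Strong K N B A)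
    (hBC : B ≤ C) (hCA : C ≤ A) : 0 ≤ pdim K N B C :=
  (strong_iff_pdim_nonneg.mp hs).2 C hBC hCA

lemma strong_of_pdim_le {B D A : Submodule K M} [FiniteDimensional K A] (hBD : B ≤ D)
    (hDA : D ≤ A) (h : ∀ E, D ≤ E → E ≤ A → pdim K N B D ≤ pdim K N B E) : Strong K N D A := by
  refine strong_iff_pdim_nonneg.mpr ⟨hDA, fun E hDE hEA => ?_⟩
  have : FiniteDimensional K E := Submodule.finiteDimensional_of_le hEA
  have := pdim_add_pdim (N := N) hBD hDE
  have := h E hDE hEA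
  omega

lemma MinStrong.one_le_pdim_of_lt {B A D : Submodule K M} [FiniteDimensional K A]
    (hmin : MinStrong K N B A) (hA : 1 ≤ pdim K N B A) (hBD : B < D) (hDA : D ≤ A) :
    1 ≤ pdim K N B D := by
  by_contra! hD
  have hDs : Strong K N D A := strong_of_pdim_le hBD.le hDA fun E hDE hEA =>
    (by omega : pdim K N B D ≤ 0).trans (hmin.1.pdim_nonneg (hBD.le.trans hDE) hEA)
  rcases hDA.eq_or_lt with rfl | hDA
  · omega
  · exact hmin.2.2 D hBD hDA hDs

lemma MinStrong.pdim_eq_zero_of_two_le_fdim {B A : Submodule K M} [FiniteDimensional K A]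
    (hmin : MinStrong K N B A) (h2 : 2 ≤ fdim K B A) : pdim K N B A = 0 := by
  have hBA := hmin.2.1
  have : FiniteDimensional K B := Submodule.finiteDimensional_of_le hBA.le
  refine le_antisymm ?_ (hmin.1.pdim_nonneg hBA.le le_rfl)
  by_contra! hA
  obtain ⟨a, haA, haB⟩ := SetLike.exists_of_lt hBA
  set C := B ⊔ K ∙ a
  have hBC : B < C := left_lt_sup.mpr fun h => haB (h (Submodule.mem_span_singleton_self a))
  have hCA : C ≤ A := sup_le hBA.le ((Submodule.span_singleton_le_iff_mem a A).mpr haA)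
  have hC : fdim K B C ≤ 1 := fdim_sup_span_singleton_le_one B a
  have hCA' : C < A := hCA.lt_of_ne fun h => by rw [h] at hC; omega
  refine hmin.2.2 C hBC hCA' (strong_of_pdim_le hBC.le hCA fun E hCE hEA => ?_)
  calc pdim K N B C ≤ 1 := (pdim_le_fdim B C).trans (by exact_mod_cast hC)
    _ ≤ pdim K N B E := hmin.one_le_pdim_of_lt hA (hBC.trans_le hCE) hEA

theorem statement12_general {K : Type u} [Field K] {M : Type v} [AddCommGroup M] [Module K M]
    (N : Submodule K (ExteriorAlgebra K M))
    (B A : Submodule K M) [FiniteDimensional K ↥A]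
    (hmin : MinStrong K N B A) :
    (pdim K N B A = 0 ∨ pdim K N B A = 1) ∧ (2 ≤ fdim K B A → pdim K N B A = 0) := by
  refine ⟨?_, hmin.pdim_eq_zero_of_two_le_fdim⟩
  have h0 := hmin.1.pdim_nonneg hmin.2.1.le le_rfl
  have hle := pdim_le_fdim (N := N) B A
  rcases (by have := fdim_pos_of_lt hmin.2.1; omega : fdim K B A = 1 ∨ 2 ≤ fdim K B A)
    with h1 | h2
  · omega
  · exact .inl (hmin.pdim_eq_zero_of_two_le_fdim h2)

/-- classification of minimal strong extensions: if `A` is a minimal strong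
extension of `B`, then `δ(A/B) ∈ {0, 1}`, and if `dim(A/B) ≥ 2` then `δ(A/B) = 0`. -/
theorem statement12 {K : Type u} [Field K] {M : Type v} [AddCommGroup M] [Module K M]
    (N : Submodule K (ExteriorAlgebra K M)) (hN : N ≤ wedge2 K (⊤ : Submodule K M))
    (B A : Submodule K M) [FiniteDimensional K ↥A] (hBA : B ≤ A)
    (hmin : MinStrong K N B A) :
    (pdim K N B A = 0 ∨ pdim K N B A = 1) ∧ (2 ≤ fdim K B A → pdim K N B A = 0) :=
  statement12_general N B A hmin

end
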